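/- arXiv:2001.06950 — 2 statements merged into one kernel-verified Lean document; each statement's English description precedes it below -/
import Mathlib

section
/- Let Ω ⊂ ℝⁿ be a bounded measurable set and let (ρₙ) be a sequence of measurable functions on Ω, and P, G : ℝ → ℝ continuous non-decreasing functions. Suppose P(ρₙ) ⇀ p̄, G(ρₙ) ⇀ ḡ and P(ρₙ)G(ρₙ) ⇀ h̄ weakly in L¹(Ω). Then p̄ · ḡ ≤ h̄ almost everywhere in Ω. -/
open MeasureTheory Filter

/-- Weak convergence in `L¹(Ω)`: convergence of integrals against every bounded
measurable test function. -/
def WeakL1TendstoOn {d : ℕ} (Ω : Set (EuclideanSpace ℝ (Fin d)))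
    (f : ℕ → EuclideanSpace ℝ (Fin d) → ℝ) (F : EuclideanSpace ℝ (Fin d) → ℝ) : Prop :=
  ∀ ψ : EuclideanSpace ℝ (Fin d) → ℝ, Measurable ψ → (∃ K : ℝ, ∀ x, |ψ x| ≤ K) →
    Tendsto (fun n => ∫ x in Ω, f n x * ψ x) atTop (nhds (∫ x in Ω, F x * ψ x))

open Metric Set Topology

/-! For each `n`, `P ∘ ρₙ` and `G ∘ ρₙ` are similarly ordered, so Chebyshev's integral inequality
with a nonnegative bounded weight `ψ` gives `(∫ P(ρₙ)ψ)(∫ G(ρₙ)ψ) ≤ (∫ P(ρₙ)G(ρₙ)ψ)(∫ ψ)` on `Ω`,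
and weak convergence passes this to `p̄`, `ḡ`, `h̄`. Taking for `ψ` the indicator of a ball and
dividing by the square of its measure, Lebesgue's differentiation theorem localises the inequality
to `p̄ ḡ ≤ h̄` at almost every point of `Ω`. -/

theorem Monovary.integral_mul_integral_le_integral_mul_integral {X : Type*} [MeasurableSpace X]
    {ν : Measure X} [SigmaFinite ν] {f g ψ : X → ℝ} (hfg : Monovary f g) (hψ : ∀ x, 0 ≤ ψ x)
    (hf : Integrable (fun x => f x * ψ x) ν) (hg : Integrable (fun x => g x * ψ x) ν)
    (hfg' : Integrable (fun x => f x * g x * ψ x) ν) (hψi : Integrable ψ ν) :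
    (∫ x, f x * ψ x ∂ν) * (∫ x, g x * ψ x ∂ν) ≤
      (∫ x, f x * g x * ψ x ∂ν) * ∫ x, ψ x ∂ν := by
  -- Integrate `0 ≤ (f y - f x) (g y - g x) ψ x ψ y` over `ν ⊗ ν` and expand.
  have hA := hfg'.mul_prod hψi
  have hB := hψi.mul_prod hfg'
  have hC := hf.mul_prod hg
  have hD := hg.mul_prod hf
  have hexpand : (fun z : X × X => (f z.2 - f z.1) * (g z.2 - g z.1) * (ψ z.1 * ψ z.2)) =
      fun z => (f z.1 * g z.1 * ψ z.1 * ψ z.2 + ψ z.1 * (f z.2 * g z.2 * ψ z.2)) -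
        (f z.1 * ψ z.1 * (g z.2 * ψ z.2) + g z.1 * ψ z.1 * (f z.2 * ψ z.2)) := by
    funext z; ring
  have hnonneg : 0 ≤ ∫ z, (f z.2 - f z.1) * (g z.2 - g z.1) * (ψ z.1 * ψ z.2) ∂ν.prod ν :=
    integral_nonneg fun z => mul_nonneg (hfg.sub_mul_sub_nonneg _ _) (mul_nonneg (hψ _) (hψ _))
  have hsub := integral_sub (hA.add hB) (hC.add hD)
  simp only [Pi.add_apply] at hsub
  rw [hexpand, hsub, integral_add hA hB, integral_add hC hD,
    integral_prod_mul (fun x => f x * g x * ψ x) ψ,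
    integral_prod_mul ψ (fun x => f x * g x * ψ x),
    integral_prod_mul (fun x => f x * ψ x) (fun x => g x * ψ x),
    integral_prod_mul (fun x => g x * ψ x) (fun x => f x * ψ x)] at hnonneg
  linarith

theorem setIntegral_mul_setIntegral_le_of_weakL1TendstoOn {d : ℕ}
    {Ω : Set (EuclideanSpace ℝ (Fin d))} (hΩ : volume Ω < ⊤)
    {f g : ℕ → EuclideanSpace ℝ (Fin d) → ℝ} {F G H : EuclideanSpace ℝ (Fin d) → ℝ}
    (hfg : ∀ n, Monovary (f n) (g n)) (hf : ∀ n, IntegrableOn (f n) Ω)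
    (hg : ∀ n, IntegrableOn (g n) Ω) (hfg' : ∀ n, IntegrableOn (fun x => f n x * g n x) Ω)
    (hfF : WeakL1TendstoOn Ω f F) (hgG : WeakL1TendstoOn Ω g G)
    (hfgH : WeakL1TendstoOn Ω (fun n x => f n x * g n x) H)
    {ψ : EuclideanSpace ℝ (Fin d) → ℝ} (hψm : Measurable ψ) (hψ : ∀ x, 0 ≤ ψ x)
    (hψb : ∃ K, ∀ x, |ψ x| ≤ K) :
    (∫ x in Ω, F x * ψ x) * (∫ x in Ω, G x * ψ x) ≤
      (∫ x in Ω, H x * ψ x) * ∫ x in Ω, ψ x := by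
  have : IsFiniteMeasure (volume.restrict Ω) := isFiniteMeasure_restrict.2 hΩ.ne
  obtain ⟨K, hK⟩ := hψb
  have hψK : ∀ᵐ x ∂volume.restrict Ω, ‖ψ x‖ ≤ K := ae_of_all _ hK
  have hmul : ∀ u : EuclideanSpace ℝ (Fin d) → ℝ, IntegrableOn u Ω →
      IntegrableOn (fun x => u x * ψ x) Ω := fun u hu =>
    hu.mul_bdd hψm.aestronglyMeasurable hψK
  have hψi : IntegrableOn ψ Ω := (integrable_const K).mono' hψm.aestronglyMeasurable hψK
  refine le_of_tendsto_of_tendsto' ((hfF ψ hψm ⟨K, hK⟩).mul (hgG ψ hψm ⟨K, hK⟩))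
    ((hfgH ψ hψm ⟨K, hK⟩).mul tendsto_const_nhds) fun n => ?_
  exact (hfg n).integral_mul_integral_le_integral_mul_integral hψ (hmul _ (hf n))
    (hmul _ (hg n)) (hmul _ (hfg' n)) hψi

section Localization

variable {α : Type*} [PseudoMetricSpace α] [MeasurableSpace α] [BorelSpace α]
  [SecondCountableTopology α] {μ : Measure α} [IsUnifLocDoublingMeasure μ]
  [IsLocallyFiniteMeasure μ]

theorem ae_tendsto_average_closedBall {f : α → ℝ} (hf : LocallyIntegrable f μ) :
    ∀ᵐ x ∂μ, Tendsto (fun r => ⨍ y in closedBall x r, f y ∂μ) (𝓝[>] 0) (𝓝 (f x)) := by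
  filter_upwards [IsUnifLocDoublingMeasure.ae_tendsto_average μ hf 1] with x hx
  refine hx (fun _ => x) id tendsto_id ?_
  filter_upwards [self_mem_nhdsWithin] with r hr
  exact mem_closedBall_self (by simpa using le_of_lt hr)

theorem ae_mul_le_mul_of_setIntegral_closedBall {a b c e : α → ℝ}
    (ha : LocallyIntegrable a μ) (hb : LocallyIntegrable b μ) (hc : LocallyIntegrable c μ)
    (he : LocallyIntegrable e μ)
    (h : ∀ x, ∀ r > 0, (∫ y in closedBall x r, a y ∂μ) * (∫ y in closedBall x r, b y ∂μ) ≤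
      (∫ y in closedBall x r, c y ∂μ) * ∫ y in closedBall x r, e y ∂μ) :
    ∀ᵐ x ∂μ, a x * b x ≤ c x * e x := by
  filter_upwards [ae_tendsto_average_closedBall ha, ae_tendsto_average_closedBall hb,
    ae_tendsto_average_closedBall hc, ae_tendsto_average_closedBall he] with x hax hbx hcx hex
  refine le_of_tendsto_of_tendsto (hax.mul hbx) (hcx.mul hex) ?_
  filter_upwards [self_mem_nhdsWithin] with r hr
  simp only [setAverage_eq, smul_eq_mul, mul_mul_mul_comm _ (∫ y in closedBall x r, a y ∂μ),
    mul_mul_mul_comm _ (∫ y in closedBall x r, c y ∂μ)]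
  exact mul_le_mul_of_nonneg_left (h x r hr) (by positivity)

end Localization

theorem setIntegral_mul_indicator_one {X : Type*} [MeasurableSpace X] {μ : Measure X}
    {s t : Set X} (hs : MeasurableSet s) (ht : MeasurableSet t) (F : X → ℝ) :
    ∫ x in s, F x * t.indicator 1 x ∂μ = ∫ x in t, s.indicator F x ∂μ := by
  have hF : (fun x => F x * t.indicator 1 x) = t.indicator F := by
    funext x
    by_cases hx : x ∈ t <;> simp [hx]
  rw [hF, setIntegral_indicator ht, setIntegral_indicator hs, inter_comm]

theorem weak_limit_product_of_monotone_ge_general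
    {d : ℕ} (Ω : Set (EuclideanSpace ℝ (Fin d))) (hΩm : MeasurableSet Ω)
    (hΩb : Bornology.IsBounded Ω)
    (P G : ℝ → ℝ) (hPm : Monotone P) (hGm : Monotone G)
    (ρ : ℕ → EuclideanSpace ℝ (Fin d) → ℝ)
    (pbar gbar hbar : EuclideanSpace ℝ (Fin d) → ℝ)
    (hP1 : ∀ n, IntegrableOn (fun x => P (ρ n x)) Ω volume)
    (hG1 : ∀ n, IntegrableOn (fun x => G (ρ n x)) Ω volume)
    (hPG1 : ∀ n, IntegrableOn (fun x => P (ρ n x) * G (ρ n x)) Ω volume)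
    (hp1 : IntegrableOn pbar Ω volume) (hg1 : IntegrableOn gbar Ω volume)
    (hh1 : IntegrableOn hbar Ω volume)
    (hPw : WeakL1TendstoOn Ω (fun n x => P (ρ n x)) pbar)
    (hGw : WeakL1TendstoOn Ω (fun n x => G (ρ n x)) gbar)
    (hPGw : WeakL1TendstoOn Ω (fun n x => P (ρ n x) * G (ρ n x)) hbar) :
    ∀ᵐ x ∂(volume.restrict Ω), pbar x * gbar x ≤ hbar x := by
  have hΩ : volume Ω < ⊤ := hΩb.measure_lt_top
  have hball : ∀ x, ∀ r > 0,
      (∫ y in closedBall x r, Ω.indicator pbar y) * (∫ y in closedBall x r, Ω.indicator gbar y) ≤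
        (∫ y in closedBall x r, Ω.indicator hbar y) * ∫ y in closedBall x r, Ω.indicator 1 y := by
    intro x r _
    have hB : MeasurableSet (closedBall x r) := measurableSet_closedBall
    have h := setIntegral_mul_setIntegral_le_of_weakL1TendstoOn hΩ
      (fun n => (hPm.monovary hGm).comp_right (ρ n)) hP1 hG1 hPG1 hPw hGw hPGw
      (measurable_one.indicator hB) (indicator_nonneg fun _ _ => zero_le_one)
      ⟨1, fun y => by by_cases hy : y ∈ closedBall x r <;> simp [hy]⟩
    have hone := setIntegral_mul_indicator_one (μ := volume) hΩm hB 1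
    simp only [Pi.one_apply, one_mul] at hone
    rwa [setIntegral_mul_indicator_one hΩm hB, setIntegral_mul_indicator_one hΩm hB,
      setIntegral_mul_indicator_one hΩm hB, hone] at h
  have hloc : ∀ u : EuclideanSpace ℝ (Fin d) → ℝ, IntegrableOn u Ω →
      LocallyIntegrable (Ω.indicator u) :=
    fun u hu => (hu.integrable_indicator hΩm).locallyIntegrable
  filter_upwards [ae_restrict_mem hΩm, ae_restrict_of_ae (ae_mul_le_mul_of_setIntegral_closedBall
    (hloc _ hp1) (hloc _ hg1) (hloc _ hh1) (hloc 1 (integrableOn_const hΩ.ne)) hball)]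
    with x hx hle
  simpa [indicator_of_mem hx] using hle

theorem weak_limit_product_of_monotone_ge
    {d : ℕ} (Ω : Set (EuclideanSpace ℝ (Fin d))) (hΩm : MeasurableSet Ω)
    (hΩb : Bornology.IsBounded Ω)
    (P G : ℝ → ℝ) (hPc : Continuous P) (hPm : Monotone P)
    (hGc : Continuous G) (hGm : Monotone G)
    (ρ : ℕ → EuclideanSpace ℝ (Fin d) → ℝ) (hρ : ∀ n, Measurable (ρ n))
    (pbar gbar hbar : EuclideanSpace ℝ (Fin d) → ℝ)
    (hP1 : ∀ n, IntegrableOn (fun x => P (ρ n x)) Ω volume)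
    (hG1 : ∀ n, IntegrableOn (fun x => G (ρ n x)) Ω volume)
    (hPG1 : ∀ n, IntegrableOn (fun x => P (ρ n x) * G (ρ n x)) Ω volume)
    (hp1 : IntegrableOn pbar Ω volume) (hg1 : IntegrableOn gbar Ω volume)
    (hh1 : IntegrableOn hbar Ω volume)
    (hPw : WeakL1TendstoOn Ω (fun n x => P (ρ n x)) pbar)
    (hGw : WeakL1TendstoOn Ω (fun n x => G (ρ n x)) gbar)
    (hPGw : WeakL1TendstoOn Ω (fun n x => P (ρ n x) * G (ρ n x)) hbar) :
    ∀ᵐ x ∂(volume.restrict Ω), pbar x * gbar x ≤ hbar x :=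
  weak_limit_product_of_monotone_ge_general Ω hΩm hΩb P G hPm hGm ρ pbar gbar hbar hP1 hG1 hPG1 hp1
    hg1 hh1 hPw hGw hPGw
end

section
/- Let Ω ⊂ ℝⁿ be a bounded measurable set, P : ℝ → ℝ continuous and non-decreasing, and (ρₙ) a sequence of measurable functions with ρₙ ⇀ ρ, P(ρₙ) ⇀ p̄ and P(ρₙ)ρₙ ⇀ p̄·ρ weakly in L¹(Ω) (i.e., the weak limit of the products equals the product of the weak limits). Then p̄ = P(ρ) almost everywhere in Ω. -/
/-! Minty's trick. Monotonicity of `P` makes `(P ρₙ - P c) (ρₙ - c) ≥ 0` for every constant `c`.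
Expanding the product, each term converges weakly, the quadratic one to `p̄ ρ` by hypothesis, so
`(p̄ - P c) (ρ - c) ≥ 0` a.e. Letting `c` run over the rationals, at almost every point `p̄ ≥ P c`
for `c < ρ` and `p̄ ≤ P c` for `c > ρ`, hence `p̄ = P ρ` by continuity of `P`. -/

open MeasureTheory Filter

open Topology

lemma Monotone.sub_mul_sub_nonneg {P : ℝ → ℝ} (hP : Monotone P) (a c : ℝ) :
    0 ≤ (P a - P c) * (a - c) := by
  rcases le_total a c with h | h
  · exact mul_nonneg_of_nonpos_of_nonpos (sub_nonpos.2 (hP h)) (sub_nonpos.2 h)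
  · exact mul_nonneg (sub_nonneg.2 (hP h)) (sub_nonneg.2 h)

lemma eq_of_forall_rat_mul_sub_nonneg {P : ℝ → ℝ} (hP : Continuous P) {r b : ℝ}
    (h : ∀ q : ℚ, 0 ≤ (b - P q) * (r - q)) : b = P r := by
  have hreal (t : ℝ) : 0 ≤ (b - P t) * (r - t) :=
    Rat.denseRange_cast.induction_on t (isClosed_le continuous_const (by fun_prop)) h
  have below : ∀ t < r, P t ≤ b := fun t ht =>
    sub_nonneg.1 (nonneg_of_mul_nonneg_left (hreal t) (sub_pos.2 ht))
  have above : ∀ t > r, b ≤ P t := fun t ht =>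
    sub_nonpos.1 (nonpos_of_mul_nonneg_left (hreal t) (sub_neg.2 ht))
  exact le_antisymm
    (ge_of_tendsto (hP.tendsto r |>.mono_left nhdsWithin_le_nhds)
      (eventually_nhdsWithin_of_forall (s := Set.Ioi r) above))
    (le_of_tendsto (hP.tendsto r |>.mono_left nhdsWithin_le_nhds)
      (eventually_nhdsWithin_of_forall (s := Set.Iio r) below))

section WeakTendsto

variable {α : Type*} [MeasurableSpace α] {μ : Measure α}

/-- `WeakL1TendstoOn Ω` is `WeakTendsto (volume.restrict Ω)` by definition. -/
def WeakTendsto (μ : Measure α) (f : ℕ → α → ℝ) (F : α → ℝ) : Prop :=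
  ∀ ψ : α → ℝ, Measurable ψ → (∃ K : ℝ, ∀ x, |ψ x| ≤ K) →
    Tendsto (fun n => ∫ x, f n x * ψ x ∂μ) atTop (𝓝 (∫ x, F x * ψ x ∂μ))

lemma weakTendsto_const (F : α → ℝ) : WeakTendsto μ (fun _ => F) F :=
  fun _ _ _ => tendsto_const_nhds

lemma WeakTendsto.const_mul {f : ℕ → α → ℝ} {F : α → ℝ} (hf : WeakTendsto μ f F) (c : ℝ) :
    WeakTendsto μ (fun n x => c * f n x) (fun x => c * F x) := by
  rintro ψ hψ ⟨K, hK⟩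
  have hcψ := hf (fun x => c * ψ x) (hψ.const_mul c)
    ⟨|c| * K, fun x => by rw [abs_mul]; exact mul_le_mul_of_nonneg_left (hK x) (abs_nonneg c)⟩
  simpa only [mul_assoc, mul_left_comm c] using hcψ

lemma WeakTendsto.sub {f g : ℕ → α → ℝ} {F G : α → ℝ} (hf : WeakTendsto μ f F)
    (hg : WeakTendsto μ g G) (hfi : ∀ n, Integrable (f n) μ) (hgi : ∀ n, Integrable (g n) μ)
    (hFi : Integrable F μ) (hGi : Integrable G μ) :
    WeakTendsto μ (fun n x => f n x - g n x) (fun x => F x - G x) := by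
  rintro ψ hψ ⟨K, hK⟩
  have hint {h : α → ℝ} (hh : Integrable h μ) : Integrable (fun x => h x * ψ x) μ :=
    hh.mul_bdd hψ.aestronglyMeasurable (ae_of_all _ hK)
  simp only [sub_mul]
  rw [integral_sub (hint hFi) (hint hGi)]
  exact ((hf ψ hψ ⟨K, hK⟩).sub (hg ψ hψ ⟨K, hK⟩)).congr fun n =>
    (integral_sub (hint (hfi n)) (hint (hgi n))).symm

lemma WeakTendsto.ae_nonneg {f : ℕ → α → ℝ} {F : α → ℝ} (hf : WeakTendsto μ f F)
    (hF : Integrable F μ) (hnn : ∀ n x, 0 ≤ f n x) : 0 ≤ᵐ[μ] F := by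
  refine ae_nonneg_of_forall_setIntegral_nonneg hF fun s hs _ => ?_
  have hmul_indicator (h : α → ℝ) : ∫ x, h x * s.indicator 1 x ∂μ = ∫ x in s, h x ∂μ := by
    rw [← integral_indicator hs]
    congr 1 with x
    by_cases hx : x ∈ s <;> simp [hx]
  have hlim := hf (s.indicator 1) (measurable_one.indicator hs) ⟨1, fun x => by
    by_cases hx : x ∈ s <;> simp [hx]⟩
  rw [← hmul_indicator]
  exact ge_of_tendsto' hlim fun n => integral_nonneg fun x =>
    mul_nonneg (hnn n x) (Set.indicator_nonneg (fun _ _ => zero_le_one) x)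

lemma ae_sub_mul_sub_nonneg_of_weakTendsto [IsFiniteMeasure μ] {P : ℝ → ℝ} (hP : Monotone P)
    {ρn : ℕ → α → ℝ} {ρ pbar : α → ℝ}
    (hρn : ∀ n, Integrable (ρn n) μ) (hPρn : ∀ n, Integrable (fun x => P (ρn n x)) μ)
    (hPρnρn : ∀ n, Integrable (fun x => P (ρn n x) * ρn n x) μ)
    (hρ : Integrable ρ μ) (hpbar : Integrable pbar μ)
    (hpbarρ : Integrable (fun x => pbar x * ρ x) μ)
    (hρw : WeakTendsto μ ρn ρ) (hPw : WeakTendsto μ (fun n x => P (ρn n x)) pbar)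
    (hPρw : WeakTendsto μ (fun n x => P (ρn n x) * ρn n x) (fun x => pbar x * ρ x)) (c : ℝ) :
    0 ≤ᵐ[μ] fun x => (pbar x - P c) * (ρ x - c) := by
  have hshift := hρw.sub (weakTendsto_const fun _ => c) hρn (fun _ => integrable_const c) hρ
    (integrable_const c)
  have hquad := hPρw.sub (hPw.const_mul c) hPρnρn (fun n => (hPρn n).const_mul c) hpbarρ
    (hpbar.const_mul c)
  have hexpand := hquad.sub (hshift.const_mul (P c))
    (fun n => (hPρnρn n).sub ((hPρn n).const_mul c))
    (fun n => ((hρn n).sub (integrable_const c)).const_mul (P c))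
    (hpbarρ.sub (hpbar.const_mul c)) ((hρ.sub (integrable_const c)).const_mul (P c))
  have hlim_nonneg := hexpand.ae_nonneg
    ((hpbarρ.sub (hpbar.const_mul c)).sub ((hρ.sub (integrable_const c)).const_mul (P c)))
    fun n x => by linarith [hP.sub_mul_sub_nonneg (ρn n x) c]
  filter_upwards [hlim_nonneg] with x hx
  simp only [Pi.zero_apply] at hx ⊢
  linarith

end WeakTendsto

theorem weak_limit_of_monotone_identifies_general
    {d : ℕ} (Ω : Set (EuclideanSpace ℝ (Fin d)))
    (hΩb : Bornology.IsBounded Ω)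
    (P : ℝ → ℝ) (hPc : Continuous P) (hPm : Monotone P)
    (ρn : ℕ → EuclideanSpace ℝ (Fin d) → ℝ)
    (ρ pbar : EuclideanSpace ℝ (Fin d) → ℝ)
    (hρ1 : ∀ n, IntegrableOn (ρn n) Ω volume)
    (hP1 : ∀ n, IntegrableOn (fun x => P (ρn n x)) Ω volume)
    (hPρ1 : ∀ n, IntegrableOn (fun x => P (ρn n x) * ρn n x) Ω volume)
    (hρlim : IntegrableOn ρ Ω volume) (hplim : IntegrableOn pbar Ω volume)
    (hprodlim : IntegrableOn (fun x => pbar x * ρ x) Ω volume)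
    (hρw : WeakL1TendstoOn Ω ρn ρ)
    (hPw : WeakL1TendstoOn Ω (fun n x => P (ρn n x)) pbar)
    (hPρw : WeakL1TendstoOn Ω (fun n x => P (ρn n x) * ρn n x) (fun x => pbar x * ρ x)) :
    ∀ᵐ x ∂(volume.restrict Ω), pbar x = P (ρ x) := by
  have : IsFiniteMeasure (volume.restrict Ω) := isFiniteMeasure_restrict.2 hΩb.measure_lt_top.ne
  have hminty (q : ℚ) : 0 ≤ᵐ[volume.restrict Ω] fun x => (pbar x - P q) * (ρ x - q) :=
    ae_sub_mul_sub_nonneg_of_weakTendsto hPm hρ1 hP1 hPρ1 hρlim hplim hprodlim hρw hPw hPρw q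
  filter_upwards [ae_all_iff.2 hminty] with x hx
  exact eq_of_forall_rat_mul_sub_nonneg hPc hx

theorem weak_limit_of_monotone_identifies
    {d : ℕ} (Ω : Set (EuclideanSpace ℝ (Fin d))) (hΩm : MeasurableSet Ω)
    (hΩb : Bornology.IsBounded Ω)
    (P : ℝ → ℝ) (hPc : Continuous P) (hPm : Monotone P)
    (ρn : ℕ → EuclideanSpace ℝ (Fin d) → ℝ) (hρn : ∀ n, Measurable (ρn n))
    (ρ pbar : EuclideanSpace ℝ (Fin d) → ℝ)
    (hρ1 : ∀ n, IntegrableOn (ρn n) Ω volume)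
    (hP1 : ∀ n, IntegrableOn (fun x => P (ρn n x)) Ω volume)
    (hPρ1 : ∀ n, IntegrableOn (fun x => P (ρn n x) * ρn n x) Ω volume)
    (hρlim : IntegrableOn ρ Ω volume) (hplim : IntegrableOn pbar Ω volume)
    (hprodlim : IntegrableOn (fun x => pbar x * ρ x) Ω volume)
    (hρw : WeakL1TendstoOn Ω ρn ρ)
    (hPw : WeakL1TendstoOn Ω (fun n x => P (ρn n x)) pbar)
    (hPρw : WeakL1TendstoOn Ω (fun n x => P (ρn n x) * ρn n x) (fun x => pbar x * ρ x)) :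
    ∀ᵐ x ∂(volume.restrict Ω), pbar x = P (ρ x) :=
  weak_limit_of_monotone_identifies_general Ω hΩb P hPc hPm ρn ρ pbar hρ1 hP1 hPρ1 hρlim hplim
    hprodlim hρw hPw hPρw
end
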